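/- arXiv:1610.03532 — 8 statements merged into one kernel-verified Lean document; each statement's English description precedes it below -/
import Mathlib

section
/- Let L be a complete lattice, X a nonempty set, μ : X → L. Define φ : μ_L → L^μ by φ(μ_p) = ⋀_{x ∈ μ_p} μ(x). Then φ is a well-defined order isomorphism from (μ_L, ⊇) onto (L^μ, ≤). -/
/-!
For `p : L` and `s ⊆ X` we have `p ≤ ⋀ μ(s) ↔ s ⊆ μ_p`, so `p ↦ μ_p` and `s ↦ ⋀ μ(s)` form a
Galois connection between `L` and `(Set X, ⊇)`. For any Galois connection the two adjoints restrict
to mutually inverse order isomorphisms between their images, and here those images are exactly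
`μ_L` and `L^μ`.
-/

open OrderDual

namespace GaloisConnection

variable {α β : Type*} [PartialOrder α] [PartialOrder β] {l : α → β} {u : β → α}

def rangeOrderIso (gc : GaloisConnection l u) : Set.range l ≃o Set.range u where
  toFun b := ⟨u b, Set.mem_range_self _⟩
  invFun a := ⟨l a, Set.mem_range_self _⟩
  left_inv := by
    rintro ⟨_, a, rfl⟩
    exact Subtype.ext (gc.l_u_l_eq_l a)
  right_inv := by
    rintro ⟨_, b, rfl⟩
    exact Subtype.ext (gc.u_l_u_eq_u b)
  map_rel_iff' := by
    rintro ⟨_, a, rfl⟩ ⟨_, a', rfl⟩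
    change u (l a) ≤ u (l a') ↔ l a ≤ l a'
    rw [← gc.le_iff_le, gc.l_u_l_eq_l]

end GaloisConnection

def OrderIso.dualSubtype {α : Type*} [LE α] (S : Set α) : (↥S)ᵒᵈ ≃o ↥(ofDual ⁻¹' S) where
  toFun s := ⟨toDual (ofDual s).1, (ofDual s).2⟩
  invFun s := toDual ⟨ofDual s.1, s.2⟩
  left_inv _ := rfl
  right_inv _ := rfl
  map_rel_iff' := Iff.rfl

section cuts

variable {X L : Type*} [CompleteLattice L] (μ : X → L)

theorem gc_toDual_cut_sInf_image :
    GaloisConnection (fun p : L => toDual {x | p ≤ μ x})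
      (fun s : (Set X)ᵒᵈ => sInf (μ '' ofDual s)) := by
  intro p s
  simp [toDual_le, le_sInf_iff, Set.subset_def]

theorem range_toDual_cut :
    Set.range (fun p : L => toDual {x | p ≤ μ x}) =
      ofDual ⁻¹' {s | ∃ p : L, s = {x | p ≤ μ x}} := by
  ext s
  exact exists_congr fun _ => eq_comm

theorem range_sInf_image :
    Set.range (fun s : (Set X)ᵒᵈ => sInf (μ '' ofDual s)) =
      {p : L | ∃ B ⊆ Set.range μ, p = sInf B} := by
  ext p
  simp [Set.subset_range_iff_exists_image_eq, eq_comm]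

end cuts

theorem cutFamily_orderIso_lmu_general {X L : Type*} [CompleteLattice L]
    (μ : X → L) :
    ∃ φ : (↥{s : Set X | ∃ p : L, s = {x : X | p ≤ μ x}})ᵒᵈ ≃o
        ↥{p : L | ∃ B ⊆ Set.range μ, p = sInf B},
      ∀ s : ↥{s : Set X | ∃ p : L, s = {x : X | p ≤ μ x}},
        (φ (OrderDual.toDual s) : L) = sInf (μ '' (s : Set X)) :=
  ⟨(OrderIso.dualSubtype _).trans <| (OrderIso.setCongr _ _ (range_toDual_cut μ).symm).trans <|
      (gc_toDual_cut_sInf_image μ).rangeOrderIso.trans <|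
      OrderIso.setCongr _ _ (range_sInf_image μ),
    fun _ => rfl⟩

/-- the map `φ(μ_p) = ⋀_{x ∈ μ_p} μ(x)` is a well-defined order
isomorphism from `(μ_L, ⊇)` onto `(L^μ, ≤)`. -/
theorem cutFamily_orderIso_lmu {X L : Type*} [Nonempty X] [CompleteLattice L]
    (μ : X → L) :
    ∃ φ : (↥{s : Set X | ∃ p : L, s = {x : X | p ≤ μ x}})ᵒᵈ ≃o
        ↥{p : L | ∃ B ⊆ Set.range μ, p = sInf B},
      ∀ s : ↥{s : Set X | ∃ p : L, s = {x : X | p ≤ μ x}},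
        (φ (OrderDual.toDual s) : L) = sInf (μ '' (s : Set X)) :=
  cutFamily_orderIso_lmu_general μ
end

section
/- Let L be a complete lattice, X a nonempty set, μ : X → L, and let ν : X → L^μ be the corestriction of μ (ν(x) = μ(x), valued in the complete lattice L^μ). Then the family of cuts of ν (with respect to L^μ) equals the family of cuts of μ (with respect to L), and (L^μ)^ν = L^μ. -/
/-!
Every cut `{x | p ≤ μ x}` is also the cut at `q = ⋀ μ({x | p ≤ μ x})`, and `q` is an infimum
of values of `μ`, hence lies in `L^μ`; so both families of cuts coincide. For the second claim,
a subset `B` of `μ(X)` is the image under the inclusion `L^μ → L` of `ν(μ⁻¹(B)) ⊆ ν(X)`, so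
every infimum of values of `μ` is an infimum of values of `ν`.
-/

section

variable {X L : Type*}

lemma setOf_sInf_image_setOf_le [CompleteLattice L] (μ : X → L) (p : L) :
    {x | sInf (μ '' {x | p ≤ μ x}) ≤ μ x} = {x | p ≤ μ x} := by
  ext x
  have hp : p ≤ sInf (μ '' {x | p ≤ μ x}) := le_sInf (by rintro _ ⟨y, hy, rfl⟩; exact hy)
  exact ⟨hp.trans, fun hx => sInf_le ⟨x, hx, rfl⟩⟩

lemma setOf_cuts_eq_of_coe_comp [CompleteLattice L] {S : Set L} {μ : X → L} (ν : X → S)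
    (hν : ∀ x, (ν x : L) = μ x) (hS : ∀ A : Set X, sInf (μ '' A) ∈ S) :
    {s : Set X | ∃ p : S, s = {x | p ≤ ν x}} = {s : Set X | ∃ p : L, s = {x | p ≤ μ x}} := by
  ext s
  constructor
  · rintro ⟨p, rfl⟩
    exact ⟨p, by simp only [← Subtype.coe_le_coe, hν]⟩
  · rintro ⟨p, rfl⟩
    refine ⟨⟨_, hS {x | p ≤ μ x}⟩, ?_⟩
    simp only [← Subtype.coe_le_coe, hν, setOf_sInf_image_setOf_le]

lemma exists_subset_range_image_coe_eq {S : Set L} {μ : X → L} (ν : X → S)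
    (hν : ∀ x, (ν x : L) = μ x) {B : Set L} (hB : B ⊆ Set.range μ) :
    ∃ C ⊆ Set.range ν, (↑) '' C = B := by
  have hcomp : Subtype.val ∘ ν = μ := funext hν
  refine ⟨ν '' (μ ⁻¹' B), Set.image_subset_range _ _, ?_⟩
  rw [Set.image_image, ← Function.comp_def, hcomp, Set.image_preimage_eq_of_subset hB]

end

theorem corestriction_cuts_general {X L : Type*} [CompleteLattice L]
    (μ : X → L)
    (ν : X → ↥{p : L | ∃ B ⊆ Set.range μ, p = sInf B})
    (hν : ∀ x, (ν x : L) = μ x) :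
    {s : Set X | ∃ p, s = {x : X | p ≤ ν x}} =
      {s : Set X | ∃ p : L, s = {x : X | p ≤ μ x}} ∧
    {p : ↥{p : L | ∃ B ⊆ Set.range μ, p = sInf B} |
      ∃ B ⊆ Set.range ν, (p : L) = sInf ((↑) '' B)} = Set.univ := by
  refine ⟨setOf_cuts_eq_of_coe_comp ν hν fun A => ⟨_, Set.image_subset_range _ _, rfl⟩, ?_⟩
  refine Set.eq_univ_of_forall fun ⟨p, B, hB, hp⟩ => ?_
  obtain ⟨C, hC, hCB⟩ := exists_subset_range_image_coe_eq ν hν hB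
  exact ⟨C, hC, hCB ▸ hp⟩

/-- the corestriction `ν : X → L^μ` of `μ` has the same family of cuts
as `μ`, and `(L^μ)^ν = L^μ`. -/
theorem corestriction_cuts {X L : Type*} [Nonempty X] [CompleteLattice L]
    (μ : X → L)
    (ν : X → ↥{p : L | ∃ B ⊆ Set.range μ, p = sInf B})
    (hν : ∀ x, (ν x : L) = μ x) :
    {s : Set X | ∃ p, s = {x : X | p ≤ ν x}} =
      {s : Set X | ∃ p : L, s = {x : X | p ≤ μ x}} ∧
    {p : ↥{p : L | ∃ B ⊆ Set.range μ, p = sInf B} |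
      ∃ B ⊆ Set.range ν, (p : L) = sInf ((↑) '' B)} = Set.univ :=
  corestriction_cuts_general μ ν hν
end

section
/- Let F be a family of subsets of a nonempty set X that is closed under arbitrary intersections and contains X, let L be a complete lattice, and let L₀ be a sub-poset of L such that (F, ⊇) ≅ (L₀, ≤) and the inclusion L₀ → L preserves all infima and the top element. Then there exists an L₀-fuzzy set ν : X → L₀ such that the family of cuts of ν equals F and (L₀)^ν = L₀. -/
/-!
Send each point `x` to the image under the isomorphism of the smallest member of `F` containing
`x`. The `p`-cut of this fuzzy set is then the member of `F` corresponding to `p`, so the cuts are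
exactly `F` and `p ↦ cut p` reflects the order. Hence `q := ⋀ ν(cut p)`, which lies in `L₀` because
`L₀` is closed under infima in `L`, satisfies `p ≤ q` and `cut p ⊆ cut q`, forcing `q = p`.
-/

open Set OrderDual

section

variable {X : Type*} {F : Set (Set X)}

def pointHull (hInt : ∀ G ⊆ F, ⋂₀ G ∈ F) (x : X) : F :=
  ⟨⋂₀ {f ∈ F | x ∈ f}, hInt _ fun _ hf => hf.1⟩

theorem pointHull_le_iff (hInt : ∀ G ⊆ F, ⋂₀ G ∈ F) {x : X} {g : F} :
    pointHull hInt x ≤ g ↔ x ∈ (g : Set X) :=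
  ⟨fun h => h (mem_sInter.2 fun _ hf => hf.2), fun hx => sInter_subset_of_mem ⟨g.2, hx⟩⟩

variable {M : Type*} [Preorder M]

def fuzzyOfOrderIso (hInt : ∀ G ⊆ F, ⋂₀ G ∈ F) (φ : Fᵒᵈ ≃o M) (x : X) : M :=
  φ (toDual (pointHull hInt x))

theorem setOf_le_fuzzyOfOrderIso (hInt : ∀ G ⊆ F, ⋂₀ G ∈ F) (φ : Fᵒᵈ ≃o M) (p : M) :
    {x | p ≤ fuzzyOfOrderIso hInt φ x} = ((ofDual (φ.symm p) : F) : Set X) := by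
  ext x
  simp only [mem_ofPred_eq, fuzzyOfOrderIso, ← φ.symm_apply_le, le_toDual,
    pointHull_le_iff]

theorem cuts_fuzzyOfOrderIso (hInt : ∀ G ⊆ F, ⋂₀ G ∈ F) (φ : Fᵒᵈ ≃o M) :
    {s : Set X | ∃ p : M, s = {x | p ≤ fuzzyOfOrderIso hInt φ x}} = F := by
  ext s
  constructor
  · rintro ⟨p, rfl⟩
    rw [setOf_le_fuzzyOfOrderIso]
    exact (ofDual (φ.symm p)).2
  · intro hs
    refine ⟨φ (toDual ⟨s, hs⟩), ?_⟩
    rw [setOf_le_fuzzyOfOrderIso]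
    simp

theorem le_of_setOf_le_fuzzyOfOrderIso_subset (hInt : ∀ G ⊆ F, ⋂₀ G ∈ F)
    (φ : Fᵒᵈ ≃o M) {p q : M}
    (h : {x | p ≤ fuzzyOfOrderIso hInt φ x} ⊆ {x | q ≤ fuzzyOfOrderIso hInt φ x}) : q ≤ p := by
  rw [setOf_le_fuzzyOfOrderIso, setOf_le_fuzzyOfOrderIso] at h
  exact φ.symm.le_iff_le.1 h

end

theorem coe_eq_sInf_image_setOf_le {X L : Type*} [CompleteLattice L] {L₀ : Set L}
    (hinf : ∀ S ⊆ L₀, sInf S ∈ L₀) {ν : X → L₀}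
    (hcut : ∀ p q : L₀, {x | p ≤ ν x} ⊆ {x | q ≤ ν x} → q ≤ p) (p : L₀) :
    (p : L) = sInf ((↑) '' (ν '' {x | p ≤ ν x})) := by
  set q := sInf ((↑) '' (ν '' {x | p ≤ ν x}) : Set L)
  have hq : q ∈ L₀ := hinf _ (by rintro _ ⟨r, -, rfl⟩; exact r.2)
  have hpq : (p : L) ≤ q := le_sInf (by rintro _ ⟨_, ⟨x, hx, rfl⟩, rfl⟩; exact hx)
  have hqp : (⟨q, hq⟩ : L₀) ≤ p := hcut _ _ fun x hx => sInf_le ⟨ν x, ⟨x, hx, rfl⟩, rfl⟩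
  exact hpq.antisymm hqp

theorem exists_corestricted_fuzzy_set_general {X L : Type*} [CompleteLattice L]
    (F : Set (Set X)) (hInt : ∀ G ⊆ F, ⋂₀ G ∈ F)
    (L₀ : Set L) (hinf : ∀ S ⊆ L₀, sInf S ∈ L₀)
    (hiso : Nonempty ((↥F)ᵒᵈ ≃o ↥L₀)) :
    ∃ ν : X → ↥L₀,
      {s : Set X | ∃ p : ↥L₀, s = {x : X | p ≤ ν x}} = F ∧
      {p : ↥L₀ | ∃ B ⊆ Set.range ν, (p : L) = sInf ((↑) '' B)} = Set.univ := by
  obtain ⟨φ⟩ := hiso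
  refine ⟨fuzzyOfOrderIso hInt φ, cuts_fuzzyOfOrderIso hInt φ, eq_univ_of_forall fun p => ?_⟩
  exact ⟨_, image_subset_range _ _, coe_eq_sInf_image_setOf_le hinf
    (fun _ _ => le_of_setOf_le_fuzzyOfOrderIso_subset hInt φ) p⟩

/-- if `F` is intersection-closed, contains `X`, and `(F, ⊇) ≅ (L₀, ≤)`
for a sub-poset `L₀ ⊆ L` whose inclusion preserves all infima and the top, then
there is an `L₀`-fuzzy set `ν : X → L₀` with cut family `F` and `(L₀)^ν = L₀`. -/
theorem exists_corestricted_fuzzy_set {X L : Type*} [Nonempty X] [CompleteLattice L]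
    (F : Set (Set X)) (hXF : Set.univ ∈ F) (hInt : ∀ G ⊆ F, ⋂₀ G ∈ F)
    (L₀ : Set L) (htop : ⊤ ∈ L₀) (hinf : ∀ S ⊆ L₀, sInf S ∈ L₀)
    (hiso : Nonempty ((↥F)ᵒᵈ ≃o ↥L₀)) :
    ∃ ν : X → ↥L₀,
      {s : Set X | ∃ p : ↥L₀, s = {x : X | p ≤ ν x}} = F ∧
      {p : ↥L₀ | ∃ B ⊆ Set.range ν, (p : L) = sInf ((↑) '' B)} = Set.univ :=
  exists_corestricted_fuzzy_set_general F hInt L₀ hinf hiso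
end

section
/- Under the hypotheses of the previous statement, the composite μ = ι ∘ ν (where ι : L₀ → L is the inclusion and ν : X → L₀ has cut family F with (L₀)^ν = L₀) satisfies: the family of cuts of μ with respect to L equals F, and L^μ = L₀. -/
/-! A cut of `μ` at an arbitrary level `p : L` is the cut of `ν` at the least element of `L₀` above
`p`, which exists because `L₀` is closed under infima; hence both functions have the same cuts.
Infima in `L` of values of `μ` lie in `L₀` for the same reason, and every element of `L₀` is such
an infimum by `(L₀)^ν = L₀`. -/

section SInfClosed

variable {X L : Type*} [CompleteLattice L] {L₀ : Set L}

lemma sInf_sep_le_iff {p r : L} (hr : r ∈ L₀) : sInf {q ∈ L₀ | p ≤ q} ≤ r ↔ p ≤ r :=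
  ⟨fun h => (le_sInf fun _ hq => hq.2).trans h, fun h => sInf_le ⟨hr, h⟩⟩

lemma cuts_val_comp_eq_cuts (hinf : ∀ S ⊆ L₀, sInf S ∈ L₀) (ν : X → L₀) :
    {s : Set X | ∃ p : L, s = {x | p ≤ (ν x : L)}} = {s | ∃ p : L₀, s = {x | p ≤ ν x}} := by
  ext s
  constructor
  · rintro ⟨p, rfl⟩
    refine ⟨⟨sInf {q ∈ L₀ | p ≤ q}, hinf _ fun _ hq => hq.1⟩, ?_⟩
    ext x
    exact (sInf_sep_le_iff (ν x).2).symm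
  · rintro ⟨p, rfl⟩
    exact ⟨p, rfl⟩

lemma sInfs_range_val_comp_eq_image (hinf : ∀ S ⊆ L₀, sInf S ∈ L₀) (ν : X → L₀) :
    {p : L | ∃ B ⊆ Set.range (Subtype.val ∘ ν), p = sInf B} =
      Subtype.val '' {q : L₀ | ∃ B ⊆ Set.range ν, (q : L) = sInf (Subtype.val '' B)} := by
  ext p
  constructor
  · rintro ⟨B, hB, rfl⟩
    have hBL₀ : B ⊆ L₀ :=
      hB.trans ((Set.range_comp_subset_range _ _).trans Subtype.range_coe.subset)
    refine ⟨⟨sInf B, hinf B hBL₀⟩, ⟨Subtype.val ⁻¹' B, ?_, ?_⟩, rfl⟩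
    · rintro q hq
      obtain ⟨x, hx⟩ := hB hq
      exact ⟨x, Subtype.ext hx⟩
    · rw [Subtype.image_preimage_coe, Set.inter_eq_right.mpr hBL₀]
  · rintro ⟨q, ⟨B, hB, hq⟩, rfl⟩
    refine ⟨Subtype.val '' B, ?_, hq⟩
    rw [Set.range_comp]
    exact Set.image_mono hB

end SInfClosed

theorem composite_with_inclusion_general {X L : Type*} [CompleteLattice L]
    (F : Set (Set X))
    (L₀ : Set L) (hinf : ∀ S ⊆ L₀, sInf S ∈ L₀)
    (ν : X → ↥L₀)
    (hν₁ : {s : Set X | ∃ p : ↥L₀, s = {x : X | p ≤ ν x}} = F)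
    (hν₂ : {p : ↥L₀ | ∃ B ⊆ Set.range ν, (p : L) = sInf ((↑) '' B)} = Set.univ)
    (μ : X → L) (hμ : ∀ x, μ x = (ν x : L)) :
    {s : Set X | ∃ p : L, s = {x : X | p ≤ μ x}} = F ∧
    {p : L | ∃ B ⊆ Set.range μ, p = sInf B} = L₀ := by
  obtain rfl : μ = Subtype.val ∘ ν := funext hμ
  refine ⟨(cuts_val_comp_eq_cuts hinf ν).trans hν₁, ?_⟩
  rw [sInfs_range_val_comp_eq_image hinf ν, hν₂, Set.image_univ, Subtype.range_coe]

/-- under the hypotheses of Statement 9, the composite `μ = ι ∘ ν`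
of `ν` with the inclusion `ι : L₀ → L` has cut family (w.r.t. `L`) equal to `F`
and satisfies `L^μ = L₀`. -/
theorem composite_with_inclusion {X L : Type*} [Nonempty X] [CompleteLattice L]
    (F : Set (Set X)) (hXF : Set.univ ∈ F) (hInt : ∀ G ⊆ F, ⋂₀ G ∈ F)
    (L₀ : Set L) (htop : ⊤ ∈ L₀) (hinf : ∀ S ⊆ L₀, sInf S ∈ L₀)
    (hiso : Nonempty ((↥F)ᵒᵈ ≃o ↥L₀))
    (ν : X → ↥L₀)
    (hν₁ : {s : Set X | ∃ p : ↥L₀, s = {x : X | p ≤ ν x}} = F)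
    (hν₂ : {p : ↥L₀ | ∃ B ⊆ Set.range ν, (p : L) = sInf ((↑) '' B)} = Set.univ)
    (μ : X → L) (hμ : ∀ x, μ x = (ν x : L)) :
    {s : Set X | ∃ p : L, s = {x : X | p ≤ μ x}} = F ∧
    {p : L | ∃ B ⊆ Set.range μ, p = sInf B} = L₀ :=
  composite_with_inclusion_general F L₀ hinf ν hν₁ hν₂ μ hμ
end

section
/- Let L₀ be a complete lattice, X a nonempty set, F a family of subsets of X closed under arbitrary intersections with X ∈ F, and suppose g : X → L₀ satisfies L₀^g = L₀ and g's cut family equals F. If f : X → L₀ also satisfies L₀^f = L₀ and f's cut family equals F, then there exists an order isomorphism η : L₀ → L₀ with f = η ∘ g. -/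
/-!
Since every element of `L₀` is an infimum of values of `g`, an element `p` is recovered from its
cut as `sInf (Ici p ∩ range g)`. Hence `p ↦ {x | p ≤ g x}` is an order anti-embedding of `L₀`
into `Set X` whose image is `F`, and likewise for `f`; composing one with the inverse of the
other gives `η`. It sends `g x` to `f x` because, for either map, the cut at the value at `x` is
the least member of `F` containing `x`.
-/

open Set OrderDual

section UpperCuts

variable {X α : Type*} [CompleteLattice α] {h : X → α}

theorem sInf_Ici_inter_range (hh : ∀ p : α, ∃ B ⊆ range h, p = sInf B) (p : α) :
    sInf (Ici p ∩ range h) = p := by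
  refine le_antisymm ?_ (le_sInf fun _ hq => hq.1)
  obtain ⟨B, hB, rfl⟩ := hh p
  exact sInf_le_sInf fun b hb => ⟨sInf_le hb, hB hb⟩

theorem preimage_Ici_subset_preimage_Ici_iff (hh : ∀ p : α, ∃ B ⊆ range h, p = sInf B)
    {p q : α} : h ⁻¹' Ici q ⊆ h ⁻¹' Ici p ↔ p ≤ q := by
  refine ⟨fun hcut => ?_, fun hpq => preimage_mono (Ici_subset_Ici.mpr hpq)⟩
  rw [← sInf_Ici_inter_range hh p, ← sInf_Ici_inter_range hh q]
  refine sInf_le_sInf ?_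
  rintro _ ⟨hq, x, rfl⟩
  exact ⟨hcut hq, x, rfl⟩

def upperCutEmbedding (hh : ∀ p : α, ∃ B ⊆ range h, p = sInf B) : α ↪o (Set X)ᵒᵈ :=
  OrderEmbedding.ofMapLEIff (fun p => toDual (h ⁻¹' Ici p)) fun _ _ =>
    preimage_Ici_subset_preimage_Ici_iff hh

theorem preimage_Ici_apply_eq_sInter (h : X → α) (x : X) :
    h ⁻¹' Ici (h x) = ⋂₀ {S | S ∈ range (fun p => h ⁻¹' Ici p) ∧ x ∈ S} := by
  refine Subset.antisymm ?_ fun y hy => hy _ ⟨⟨h x, rfl⟩, le_rfl⟩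
  rintro y hy S ⟨⟨p, rfl⟩, hx⟩
  exact le_trans hx hy

end UpperCuts

theorem exists_orderIso_comp_general {X L₀ : Type*} [CompleteLattice L₀]
    (F : Set (Set X))
    (g f : X → L₀)
    (hg₁ : {p : L₀ | ∃ B ⊆ Set.range g, p = sInf B} = Set.univ)
    (hg₂ : {s : Set X | ∃ p : L₀, s = {x : X | p ≤ g x}} = F)
    (hf₁ : {p : L₀ | ∃ B ⊆ Set.range f, p = sInf B} = Set.univ)
    (hf₂ : {s : Set X | ∃ p : L₀, s = {x : X | p ≤ f x}} = F) :
    ∃ η : L₀ ≃o L₀, f = ⇑η ∘ g := by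
  have hg : ∀ p : L₀, ∃ B ⊆ range g, p = sInf B := eq_univ_iff_forall.mp hg₁
  have hf : ∀ p : L₀, ∃ B ⊆ range f, p = sInf B := eq_univ_iff_forall.mp hf₁
  have range_cuts (h : X → L₀) :
      range (fun p => h ⁻¹' Ici p) = {s : Set X | ∃ p : L₀, s = {x : X | p ≤ h x}} := by
    ext s
    simp only [mem_range, mem_ofPred_eq, eq_comm]
    rfl
  have hcuts : range (fun p => g ⁻¹' Ici p) = range (fun p => f ⁻¹' Ici p) := by
    rw [range_cuts, range_cuts, hg₂, hf₂]
  have hranges : range (upperCutEmbedding hg) = range (upperCutEmbedding hf) := hcuts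
  let η := (upperCutEmbedding hg).orderIso.trans
    ((OrderIso.setCongr _ _ hranges).trans (upperCutEmbedding hf).orderIso.symm)
  refine ⟨η, funext fun x => ?_⟩
  rw [Function.comp_apply, eq_comm, OrderIso.trans_apply, OrderIso.trans_apply,
    OrderIso.symm_apply_eq]
  refine Subtype.ext (congrArg toDual ?_)
  change g ⁻¹' Ici (g x) = f ⁻¹' Ici (f x)
  rw [preimage_Ici_apply_eq_sInter, preimage_Ici_apply_eq_sInter, hcuts]

/-- if `f, g : X → L₀` both satisfy `L₀^h = L₀` and have cut family
`F`, then `f = η ∘ g` for some order isomorphism `η` of `L₀`. -/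
theorem exists_orderIso_comp {X L₀ : Type*} [Nonempty X] [CompleteLattice L₀]
    (F : Set (Set X)) (hXF : Set.univ ∈ F) (hInt : ∀ G ⊆ F, ⋂₀ G ∈ F)
    (g f : X → L₀)
    (hg₁ : {p : L₀ | ∃ B ⊆ Set.range g, p = sInf B} = Set.univ)
    (hg₂ : {s : Set X | ∃ p : L₀, s = {x : X | p ≤ g x}} = F)
    (hf₁ : {p : L₀ | ∃ B ⊆ Set.range f, p = sInf B} = Set.univ)
    (hf₂ : {s : Set X | ∃ p : L₀, s = {x : X | p ≤ f x}} = F) :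
    ∃ η : L₀ ≃o L₀, f = ⇑η ∘ g :=
  exists_orderIso_comp_general F g f hg₁ hg₂ hf₁ hf₂
end

section
/- Let L₀ be a complete lattice, X nonempty, and f, g : X → L₀ with L₀^f = L₀^g = L₀ and equal cut families. Define η : L₀ → L₀ by η(t) = ⋀_{x ∈ g_t} f(x), where g_t = {x : g(x) ≥ t}. Then η is an order isomorphism of L₀ whose inverse is η₁(t) = ⋀_{x ∈ f_t} g(x), and f = η ∘ g. -/
/-!
Every `t` is an infimum of values of `f`, hence the infimum of the values of `f` on its own cut
`f_t`; likewise for `g`. Since the cut families agree, `g_t = f_{t'}` for some `t'`, which forces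
`η t = t'` and then `η₁ t' = t`. Finally `f x` is recovered from `g x` because the cut `f_{f x}`,
a cut of `g` containing `x`, contains every `y` with `g x ≤ g y`.
-/

section CutInf

variable {X α : Type*} [CompleteLattice α]

theorem sInf_image_setOf_sInf_le {h : X → α} {B : Set α} (hB : B ⊆ Set.range h) :
    sInf (h '' {x | sInf B ≤ h x}) = sInf B := by
  refine le_antisymm (sInf_le_sInf fun b hb => ?_) (le_sInf ?_)
  · obtain ⟨x, rfl⟩ := hB hb
    exact ⟨x, sInf_le hb, rfl⟩
  · rintro _ ⟨x, hx, rfl⟩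
    exact hx

theorem sInf_image_setOf_le_eq {h : X → α}
    (hh : {p : α | ∃ B ⊆ Set.range h, p = sInf B} = Set.univ) (t : α) :
    sInf (h '' {x | t ≤ h x}) = t := by
  obtain ⟨B, hB, rfl⟩ : t ∈ {p : α | ∃ B ⊆ Set.range h, p = sInf B} := hh ▸ Set.mem_univ t
  exact sInf_image_setOf_sInf_le hB

theorem monotone_sInf_image_setOf_le (f g : X → α) :
    Monotone fun t => sInf (f '' {x | t ≤ g x}) :=
  fun _ _ hab => sInf_le_sInf <| Set.image_mono fun _ hx => hab.trans hx

theorem sInf_image_setOf_sInf_image_setOf_le {f g : X → α}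
    (hf : ∀ t, sInf (f '' {x | t ≤ f x}) = t) (hg : ∀ t, sInf (g '' {x | t ≤ g x}) = t)
    (hcut : ∀ t, ∃ t', {x | t ≤ g x} = {x | t' ≤ f x}) (t : α) :
    sInf (g '' {x | sInf (f '' {y | t ≤ g y}) ≤ f x}) = t := by
  obtain ⟨t', ht'⟩ := hcut t
  rw [ht', hf, ← ht', hg]

theorem eq_sInf_image_setOf_le_of_cut {f g : X → α}
    (hcut : ∀ t, ∃ s, {x | t ≤ f x} = {x | s ≤ g x}) (x : X) :
    f x = sInf (f '' {y | g x ≤ g y}) := by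
  refine le_antisymm (le_sInf ?_) (sInf_le ⟨x, le_rfl, rfl⟩)
  rintro _ ⟨y, hy, rfl⟩
  obtain ⟨s, hs⟩ := hcut (f x)
  have hxs : x ∈ {y | s ≤ g y} := hs ▸ le_refl (f x)
  have hys : y ∈ {y | s ≤ g y} := le_trans hxs hy
  exact (hs ▸ hys : y ∈ {y | f x ≤ f y})

end CutInf

theorem eta_orderIso_general {X L₀ : Type*} [CompleteLattice L₀]
    (f g : X → L₀)
    (hf : {p : L₀ | ∃ B ⊆ Set.range f, p = sInf B} = Set.univ)
    (hg : {p : L₀ | ∃ B ⊆ Set.range g, p = sInf B} = Set.univ)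
    (hcut : {s : Set X | ∃ t : L₀, s = {x : X | t ≤ f x}} =
      {s : Set X | ∃ t : L₀, s = {x : X | t ≤ g x}})
    (η η₁ : L₀ → L₀)
    (hη : ∀ t, η t = sInf (f '' {x : X | t ≤ g x}))
    (hη₁ : ∀ t, η₁ t = sInf (g '' {x : X | t ≤ f x})) :
    Monotone η ∧ Monotone η₁ ∧ η₁ ∘ η = id ∧ η ∘ η₁ = id ∧ f = η ∘ g := by
  obtain rfl : η = fun t => sInf (f '' {x | t ≤ g x}) := funext hη
  obtain rfl : η₁ = fun t => sInf (g '' {x | t ≤ f x}) := funext hη₁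
  have gcut_is_fcut : ∀ t : L₀, ∃ t', {x | t ≤ g x} = {x | t' ≤ f x} := fun t =>
    (hcut ▸ ⟨t, rfl⟩ : {x | t ≤ g x} ∈ {s : Set X | ∃ t', s = {x | t' ≤ f x}})
  have fcut_is_gcut : ∀ t : L₀, ∃ t', {x | t ≤ f x} = {x | t' ≤ g x} := fun t =>
    (hcut ▸ ⟨t, rfl⟩ : {x | t ≤ f x} ∈ {s : Set X | ∃ t', s = {x | t' ≤ g x}})
  have kf := sInf_image_setOf_le_eq hf
  have kg := sInf_image_setOf_le_eq hg
  exact ⟨monotone_sInf_image_setOf_le f g, monotone_sInf_image_setOf_le g f,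
    funext <| sInf_image_setOf_sInf_image_setOf_le kf kg gcut_is_fcut,
    funext <| sInf_image_setOf_sInf_image_setOf_le kg kf fcut_is_gcut,
    funext <| eq_sInf_image_setOf_le_of_cut fcut_is_gcut⟩

/-- for `f, g` with `L₀^f = L₀^g = L₀` and equal cut families, the
map `η t = ⋀_{x ∈ g_t} f(x)` is an order isomorphism of `L₀` with inverse
`η₁ t = ⋀_{x ∈ f_t} g(x)`, and `f = η ∘ g`. -/
theorem eta_orderIso {X L₀ : Type*} [Nonempty X] [CompleteLattice L₀]
    (f g : X → L₀)
    (hf : {p : L₀ | ∃ B ⊆ Set.range f, p = sInf B} = Set.univ)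
    (hg : {p : L₀ | ∃ B ⊆ Set.range g, p = sInf B} = Set.univ)
    (hcut : {s : Set X | ∃ t : L₀, s = {x : X | t ≤ f x}} =
      {s : Set X | ∃ t : L₀, s = {x : X | t ≤ g x}})
    (η η₁ : L₀ → L₀)
    (hη : ∀ t, η t = sInf (f '' {x : X | t ≤ g x}))
    (hη₁ : ∀ t, η₁ t = sInf (g '' {x : X | t ≤ f x})) :
    Monotone η ∧ Monotone η₁ ∧ η₁ ∘ η = id ∧ η ∘ η₁ = id ∧ f = η ∘ g :=
  eta_orderIso_general f g hf hg hcut η η₁ hη hη₁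
end

section
/- Let F be a family of subsets of a nonempty set X closed under arbitrary intersections with X ∈ F, and let L be a complete lattice. Then the cardinality of N(L, F) = { f : X → L : cut family of f equals F } equals |S(L, F)| · |OI(F)|, where S(L, F) is the set of subsets L₀ of L such that the inclusion L₀ → L preserves all infima and the top element and (L₀, ≤) ≅ (F, ⊇), and OI(F) is the set of order automorphisms of (F, ⊇). -/
/-!
A map `f : X → L` with cut family `F` is encoded by the order embedding `s ↦ ⨅ x ∈ s, f x` of
`(F, ⊇)` into `L`: each `s ∈ F` is recovered as the cut of this value, and `f x` is the value at
the least member of `F` containing `x`. The embeddings arising this way are exactly those with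
image closed under infima, so `N(L, F)` is in bijection with them. Grouping the embeddings by
their image `L₀ ∈ S(L, F)`, each fibre is a torsor under the automorphisms of `(F, ⊇)`.
-/

universe u

open Set OrderDual Cardinal

section OrderEmbeddingRange

variable {α β : Type u} [LE α] [Preorder β]

noncomputable def orderEmbeddingRangeEquiv (R : Set β) :
    {e : α ↪o β // range e = R} ≃ (α ≃o R) where
  toFun e := e.1.orderIso.trans (OrderIso.setCongr _ _ e.2)
  invFun ψ := ⟨ψ.toOrderEmbedding.trans (OrderEmbedding.subtype _), by
    simp [range_comp]⟩
  left_inv _ := rfl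
  right_inv _ := by ext; rfl

theorem mk_orderEmbedding_range (P : Set β → Prop) :
    #{e : α ↪o β // P (range e)} = #{R : Set β // P R ∧ Nonempty (α ≃o R)} * #(α ≃o α) := by
  rw [← mk_congr (Equiv.sigmaSubtypeFiberEquivSubtype (fun e : α ↪o β ↦ range e)
    (q := fun R ↦ P R ∧ Nonempty (α ≃o R)) fun e ↦ ⟨fun h ↦ ⟨h, ⟨e.orderIso⟩⟩, And.left⟩),
    mk_sigma, ← sum_const']
  congr 1
  funext R
  obtain ⟨φ⟩ := R.2.2
  exact mk_congr ((orderEmbeddingRangeEquiv R.1).trans (OrderIso.orderIsoCongr (.refl α) φ.symm))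

end OrderEmbeddingRange

theorem mk_orderIso_orderDual (α : Type u) [LE α] : #(αᵒᵈ ≃o αᵒᵈ) = #(α ≃o α) :=
  mk_congr ⟨OrderIso.dual, OrderIso.dual, fun _ ↦ rfl, fun _ ↦ rfl⟩

theorem top_mem_of_sInf_mem {L : Type u} [CompleteLattice L] {R : Set L}
    (hR : ∀ T ⊆ R, sInf T ∈ R) : ⊤ ∈ R :=
  sInf_empty (α := L) ▸ hR ∅ (empty_subset R)

section CutFamily

variable {X L : Type u} [CompleteLattice L]

def cutFamily (f : X → L) : Set (Set X) := {s | ∃ p : L, s = {x | p ≤ f x}}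

theorem setOf_iInf_le_eq {f : X → L} {s : Set X} (hs : s ∈ cutFamily f) :
    {x | ⨅ y ∈ s, f y ≤ f x} = s := by
  obtain ⟨p, rfl⟩ := hs
  ext x
  exact ⟨fun h ↦ (le_iInf₂ (f := fun y (_ : p ≤ f y) ↦ f y) fun _ hy ↦ hy).trans h,
    fun h ↦ iInf₂_le x h⟩

variable {F : Set (Set X)}

def infEmbedding (f : X → L) (hF : F ⊆ cutFamily f) : (↥F)ᵒᵈ ↪o L :=
  OrderEmbedding.ofMapLEIff (fun s ↦ ⨅ x ∈ ((ofDual s : ↥F) : Set X), f x) fun s t ↦ by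
    refine ⟨fun h x hx ↦ ?_, fun h ↦ biInf_mono fun _ hx ↦ h hx⟩
    exact (setOf_iInf_le_eq (hF (ofDual s).2)).subset (h.trans (iInf₂_le x hx))

theorem infEmbedding_apply (f : X → L) (hF : F ⊆ cutFamily f) (s : (↥F)ᵒᵈ) :
    infEmbedding f hF s = ⨅ x ∈ ((ofDual s : ↥F) : Set X), f x := rfl

theorem sInf_mem_range_infEmbedding {f : X → L} (hf : cutFamily f = F)
    {T : Set L} (hT : T ⊆ range (infEmbedding f hf.ge)) :
    sInf T ∈ range (infEmbedding f hf.ge) := by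
  have hs : {x | sInf T ≤ f x} ∈ F := hf ▸ ⟨sInf T, rfl⟩
  refine ⟨toDual ⟨_, hs⟩, le_antisymm ?_ (le_iInf₂ fun _ hx ↦ hx)⟩
  refine le_sInf fun a ha ↦ ?_
  obtain ⟨t, rfl⟩ := hT ha
  exact biInf_mono fun x hx ↦ (sInf_le ha).trans (iInf₂_le x hx)

section ClosureSystem

variable (F) in
def pointClosure (x : X) : Set X := ⋂₀ {s | s ∈ F ∧ x ∈ s}

theorem mem_pointClosure (x : X) : x ∈ pointClosure F x := fun _ hs ↦ hs.2

theorem pointClosure_subset_iff {s : Set X} (hs : s ∈ F) {x : X} :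
    pointClosure F x ⊆ s ↔ x ∈ s :=
  ⟨fun h ↦ h (mem_pointClosure x), fun hx ↦ sInter_subset_of_mem ⟨hs, hx⟩⟩

variable (hInt : ∀ G ⊆ F, ⋂₀ G ∈ F)
include hInt

theorem pointClosure_mem (x : X) : pointClosure F x ∈ F := hInt _ fun _ hs ↦ hs.1

def funOfEmbedding (e : (↥F)ᵒᵈ ↪o L) (x : X) : L :=
  e (toDual ⟨pointClosure F x, pointClosure_mem hInt x⟩)

theorem le_funOfEmbedding_iff (e : (↥F)ᵒᵈ ↪o L) (t : (↥F)ᵒᵈ) {x : X} :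
    e t ≤ funOfEmbedding hInt e x ↔ x ∈ ((ofDual t : ↥F) : Set X) :=
  e.le_iff_le.trans (pointClosure_subset_iff (ofDual t).2)

theorem funOfEmbedding_infEmbedding {f : X → L} (hf : cutFamily f = F) :
    funOfEmbedding hInt (infEmbedding f hf.ge) = f := by
  funext x
  refine le_antisymm (iInf₂_le x (mem_pointClosure x)) (le_iInf₂ fun y hy ↦ ?_)
  have hx : {z | f x ≤ f z} ∈ F := hf ▸ ⟨f x, rfl⟩
  exact (pointClosure_subset_iff hx).2 le_rfl hy

section InfClosedRange

variable {e : (↥F)ᵒᵈ ↪o L} (he : ∀ T ⊆ range e, sInf T ∈ range e)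
include he

theorem cutFamily_funOfEmbedding : cutFamily (funOfEmbedding hInt e) = F := by
  ext s
  constructor
  · rintro ⟨p, rfl⟩
    -- the cut at `p` is the cut at the least element of `range e` above `p`
    obtain ⟨t, ht⟩ := he {a | a ∈ range e ∧ p ≤ a} fun _ ha ↦ ha.1
    convert (ofDual t).2
    ext x
    change p ≤ _ ↔ _
    rw [← le_funOfEmbedding_iff hInt e t, ht]
    exact ⟨fun h ↦ sInf_le ⟨⟨_, rfl⟩, h⟩, fun h ↦ (le_sInf fun _ ha ↦ ha.2).trans h⟩
  · intro hs
    let t : (↥F)ᵒᵈ := toDual ⟨s, hs⟩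
    exact ⟨e t, (ext fun _ ↦ le_funOfEmbedding_iff hInt e t).symm⟩

theorem infEmbedding_funOfEmbedding :
    infEmbedding (funOfEmbedding hInt e) (cutFamily_funOfEmbedding hInt he).ge = e := by
  ext t
  refine le_antisymm ?_ (le_iInf₂ fun x hx ↦ (le_funOfEmbedding_iff hInt e t).2 hx)
  obtain ⟨t', ht'⟩ := he (funOfEmbedding hInt e '' ((ofDual t : ↥F) : Set X)) <| by
    rintro _ ⟨x, -, rfl⟩
    exact ⟨_, rfl⟩
  rw [infEmbedding_apply, ← sInf_image, ← ht']
  refine e.monotone fun x hx ↦ (le_funOfEmbedding_iff hInt e t').1 ?_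
  exact ht' ▸ sInf_le (mem_image_of_mem _ hx)

end InfClosedRange

def cutFamilyEquiv :
    {f : X → L // cutFamily f = F} ≃
      {e : (↥F)ᵒᵈ ↪o L // ⊤ ∈ range e ∧ ∀ T ⊆ range e, sInf T ∈ range e} where
  toFun f := ⟨infEmbedding f.1 f.2.ge,
    top_mem_of_sInf_mem fun _ ↦ sInf_mem_range_infEmbedding f.2,
    fun _ ↦ sInf_mem_range_infEmbedding f.2⟩
  invFun e := ⟨funOfEmbedding hInt e.1, cutFamily_funOfEmbedding hInt e.2.2⟩
  left_inv f := Subtype.ext (funOfEmbedding_infEmbedding hInt f.2)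
  right_inv e := Subtype.ext (infEmbedding_funOfEmbedding hInt e.2.2)

end ClosureSystem

end CutFamily

theorem card_n_eq_general {X L : Type u} [CompleteLattice L]
    (F : Set (Set X)) (hInt : ∀ G ⊆ F, ⋂₀ G ∈ F) :
    Cardinal.mk {f : X → L // {s : Set X | ∃ p : L, s = {x : X | p ≤ f x}} = F} =
      Cardinal.mk {L₀ : Set L // (⊤ ∈ L₀ ∧ ∀ S ⊆ L₀, sInf S ∈ L₀) ∧
          Nonempty ((↥F)ᵒᵈ ≃o ↥L₀)} *
        Cardinal.mk (↥F ≃o ↥F) := by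
  rw [← mk_orderIso_orderDual, ← mk_orderEmbedding_range]
  exact mk_congr (cutFamilyEquiv hInt)

/-- `|N(L, F)| = |S(L, F)| · |OI(F)|`. -/
theorem card_n_eq {X L : Type u} [Nonempty X] [CompleteLattice L]
    (F : Set (Set X)) (hXF : Set.univ ∈ F) (hInt : ∀ G ⊆ F, ⋂₀ G ∈ F) :
    Cardinal.mk {f : X → L // {s : Set X | ∃ p : L, s = {x : X | p ≤ f x}} = F} =
      Cardinal.mk {L₀ : Set L // (⊤ ∈ L₀ ∧ ∀ S ⊆ L₀, sInf S ∈ L₀) ∧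
          Nonempty ((↥F)ᵒᵈ ≃o ↥L₀)} *
        Cardinal.mk (↥F ≃o ↥F) :=
  card_n_eq_general F hInt
end

section
/- Let F be a family of subsets of a nonempty set X closed under arbitrary intersections with X ∈ F, and let L be a complete lattice. There exists a unique L-fuzzy set μ : X → L whose family of cuts equals F if and only if |S(L, F)| = 1 and |OI(F)| = 1, i.e., there is exactly one subset L₀ ⊆ L whose inclusion into L preserves all infima and the top element and which is order-isomorphic to (F, ⊇), and the poset (F, ⊇) has no nontrivial order automorphisms. -/
/-!
A fuzzy set `μ` with cut family `F` is the same thing as an order embedding `φ` of `(F, ⊇)` into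
`L` whose image is closed under infima: `μ` gives `φ s = ⨅ x ∈ s, μ x` (cuts and infima form a
Galois connection between `L` and `(Set X)ᵒᵈ`), and `φ` gives back `μ x = φ (⋂ {s ∈ F | x ∈ s})`.
An order embedding is determined by its image `L₀ ∈ S(L, F)` up to precomposition with an
automorphism of `F`, so there is exactly one such embedding iff `S(L, F)` is a singleton and
`OI(F)` is trivial.
-/

open Set OrderDual

section RangeUnique

variable {α β : Type*} [Preorder α] [Preorder β]

lemma OrderEmbedding.exists_orderIso_comp_eq_of_range_eq {φ ψ : α ↪o β}
    (h : range φ = range ψ) : ∃ e : α ≃o α, ∀ a, ψ (e a) = φ a :=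
  ⟨orderIso.trans ((OrderIso.setCongr _ _ h).trans orderIso.symm), fun _ =>
    Equiv.apply_ofInjective_symm ψ.injective _⟩

lemma OrderIso.range_trans_subtype {S : Set β} (ψ : α ≃o S) :
    range (ψ.toOrderEmbedding.trans (OrderEmbedding.subtype (· ∈ S))) = S := by
  simp

theorem existsUnique_orderEmbedding_range_iff (P : Set β → Prop) :
    (∃! φ : α ↪o β, P (range φ)) ↔
      (∃! S : Set β, P S ∧ Nonempty (α ≃o S)) ∧ Subsingleton (α ≃o α) := by
  constructor
  · rintro ⟨φ, hφ, huniq : ∀ ψ : α ↪o β, P (range ψ) → ψ = φ⟩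
    refine ⟨⟨range φ, ⟨hφ, ⟨OrderEmbedding.orderIso⟩⟩, ?_⟩, ⟨fun e₁ e₂ => ?_⟩⟩
    · rintro S ⟨hS, ⟨ψ⟩⟩
      have hψ := ψ.range_trans_subtype
      exact hψ.symm.trans (congrArg (fun f : α ↪o β => range f) (huniq _ (by rwa [hψ])))
    · have is_refl : ∀ e : α ≃o α, e = OrderIso.refl α := fun e => by
        have := huniq (e.toOrderEmbedding.trans φ) (by simpa [range_comp] using hφ)
        ext a
        exact φ.injective (DFunLike.congr_fun this a)
      rw [is_refl e₁, is_refl e₂]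
  · rintro ⟨⟨S, ⟨hS, ⟨ψ⟩⟩, huniq⟩, _⟩
    refine ⟨_, show P (range _) by rwa [ψ.range_trans_subtype], fun φ hφ => ?_⟩
    obtain ⟨e, he⟩ := OrderEmbedding.exists_orderIso_comp_eq_of_range_eq
      ((huniq _ ⟨hφ, ⟨OrderEmbedding.orderIso⟩⟩).trans ψ.range_trans_subtype.symm)
    ext a
    rw [← he, Subsingleton.elim e (OrderIso.refl α)]
    rfl

end RangeUnique

lemma OrderIso.subsingleton_dual_iff {α : Type*} [LE α] :
    Subsingleton (αᵒᵈ ≃o αᵒᵈ) ↔ Subsingleton (α ≃o α) :=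
  ⟨fun _ => ⟨fun e₁ e₂ => DFunLike.ext _ _ fun x =>
      DFunLike.congr_fun (Subsingleton.elim e₁.dual e₂.dual) (toDual x)⟩,
   fun _ => ⟨fun e₁ e₂ => DFunLike.ext _ _ fun x =>
      DFunLike.congr_fun (Subsingleton.elim (α := α ≃o α) e₁.dual e₂.dual) (ofDual x)⟩⟩

namespace FuzzySet

variable {X L : Type*} [CompleteLattice L]

def cut (μ : X → L) (p : L) : Set X := {x | p ≤ μ x}

lemma gc_cut_biInf (μ : X → L) :
    GaloisConnection (fun p => toDual (cut μ p)) (fun s => ⨅ x ∈ ofDual s, μ x) :=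
  fun _ _ => toDual_le.trans le_iInf₂_iff.symm

variable {μ : X → L}

lemma cut_biInf_of_mem_range {s : Set X} (hs : s ∈ range (cut μ)) :
    cut μ (⨅ x ∈ s, μ x) = s := by
  obtain ⟨p, rfl⟩ := hs
  exact (gc_cut_biInf μ).l_u_l_eq_l p

lemma biInf_le_biInf_iff_of_mem_range {s t : Set X} (hs : s ∈ range (cut μ))
    (ht : t ∈ range (cut μ)) : ⨅ x ∈ s, μ x ≤ ⨅ x ∈ t, μ x ↔ t ⊆ s := by
  refine ⟨fun h => ?_, biInf_mono⟩
  rw [← cut_biInf_of_mem_range hs, ← cut_biInf_of_mem_range ht]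
  exact fun x hx => h.trans hx

variable {F : Set (Set X)}

def biInfEmbedding (hμ : range (cut μ) = F) : (↥F)ᵒᵈ ↪o L :=
  OrderEmbedding.ofMapLEIff (fun s => ⨅ x ∈ (ofDual s).1, μ x) fun s t =>
    biInf_le_biInf_iff_of_mem_range (hμ ▸ (ofDual s).2) (hμ ▸ (ofDual t).2)

lemma sInf_mem_range_biInfEmbedding (hμ : range (cut μ) = F) {T : Set L}
    (hT : T ⊆ range (biInfEmbedding hμ)) : sInf T ∈ range (biInfEmbedding hμ) := by
  refine ⟨toDual ⟨cut μ (sInf T), hμ ▸ mem_range_self _⟩,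
    le_antisymm ?_ ((gc_cut_biInf μ).le_u_l _)⟩
  refine le_sInf fun _ hp => ?_
  obtain ⟨s, rfl⟩ := hT hp
  exact biInf_mono ((gc_cut_biInf μ).le_iff_le.mpr (sInf_le hp))

section MooreFamily

variable (hInt : ∀ G ⊆ F, ⋂₀ G ∈ F)
include hInt

def mooreClosure : ClosureOperator (Set X) := .ofCompletePred (· ∈ F) hInt

lemma biInf_mooreClosure_singleton (hμ : range (cut μ) = F) (x : X) :
    ⨅ y ∈ mooreClosure hInt {x}, μ y = μ x :=
  le_antisymm (biInf_le _ ((mooreClosure hInt).le_closure {x} rfl)) <| le_iInf₂ fun _ hy =>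
    (mooreClosure hInt).closure_min (singleton_subset_iff.2 (le_refl (μ x)))
      (show cut μ (μ x) ∈ F from hμ ▸ mem_range_self _) hy

def ofOrderEmbedding (φ : (↥F)ᵒᵈ ↪o L) (x : X) : L :=
  φ (toDual ⟨mooreClosure hInt {x}, (mooreClosure hInt).isClosed_closure _⟩)

variable {hInt} (φ : (↥F)ᵒᵈ ↪o L)

lemma le_ofOrderEmbedding_iff (s : (↥F)ᵒᵈ) (x : X) :
    φ s ≤ ofOrderEmbedding hInt φ x ↔ x ∈ (ofDual s).1 :=
  φ.le_iff_le.trans <|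
    (ClosureOperator.IsClosed.closure_le_iff (c := mooreClosure hInt) (ofDual s).2).trans
      singleton_subset_iff

lemma cut_ofOrderEmbedding (s : (↥F)ᵒᵈ) : cut (ofOrderEmbedding hInt φ) (φ s) = ofDual s :=
  ext (le_ofOrderEmbedding_iff φ s)

variable (hφ : ∀ T ⊆ range φ, sInf T ∈ range φ)
include hφ

lemma biInf_ofOrderEmbedding_mem_range (s : Set X) :
    ⨅ x ∈ s, ofOrderEmbedding hInt φ x ∈ range φ := by
  rw [← sInf_image]
  exact hφ _ (image_subset_iff.2 fun _ _ => mem_range_self _)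

lemma biInf_ofOrderEmbedding (s : (↥F)ᵒᵈ) :
    ⨅ x ∈ (ofDual s).1, ofOrderEmbedding hInt φ x = φ s := by
  refine le_antisymm ?_ (le_iInf₂ fun x hx => (le_ofOrderEmbedding_iff φ s x).2 hx)
  obtain ⟨t, ht⟩ := biInf_ofOrderEmbedding_mem_range φ hφ (ofDual s).1
  rw [← ht]
  refine φ.monotone fun y hy => ?_
  exact (le_ofOrderEmbedding_iff φ t y).1 (ht ▸ biInf_le _ hy)

lemma range_cut_ofOrderEmbedding : range (cut (ofOrderEmbedding hInt φ)) = F := by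
  refine Subset.antisymm ?_ fun s hs =>
    ⟨φ (toDual ⟨s, hs⟩), cut_ofOrderEmbedding φ (toDual ⟨s, hs⟩)⟩
  rintro _ ⟨p, rfl⟩
  obtain ⟨t, ht⟩ := biInf_ofOrderEmbedding_mem_range φ hφ (cut (ofOrderEmbedding hInt φ) p)
  rw [← cut_biInf_of_mem_range (mem_range_self p), ← ht, cut_ofOrderEmbedding]
  exact (ofDual t).2

end MooreFamily

def cutEquivOrderEmbedding (hInt : ∀ G ⊆ F, ⋂₀ G ∈ F) :
    {μ : X → L // range (cut μ) = F} ≃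
      {φ : (↥F)ᵒᵈ ↪o L // ⊤ ∈ range φ ∧ ∀ T ⊆ range φ, sInf T ∈ range φ} where
  toFun μ := ⟨biInfEmbedding μ.2,
    by simpa using sInf_mem_range_biInfEmbedding μ.2 (empty_subset _),
    fun _ => sInf_mem_range_biInfEmbedding μ.2⟩
  invFun φ := ⟨ofOrderEmbedding hInt φ, range_cut_ofOrderEmbedding φ.1 φ.2.2⟩
  left_inv μ := Subtype.ext <| funext <| biInf_mooreClosure_singleton hInt μ.2
  right_inv φ := Subtype.ext <| DFunLike.ext _ _ <| biInf_ofOrderEmbedding φ.1 φ.2.2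

end FuzzySet

open FuzzySet

theorem unique_fuzzy_set_iff_general {X L : Type*} [CompleteLattice L]
    (F : Set (Set X)) (hInt : ∀ G ⊆ F, ⋂₀ G ∈ F) :
    (∃! μ : X → L, {s : Set X | ∃ p : L, s = {x : X | p ≤ μ x}} = F) ↔
      (∃! L₀ : Set L, (⊤ ∈ L₀ ∧ ∀ S ⊆ L₀, sInf S ∈ L₀) ∧
          Nonempty ((↥F)ᵒᵈ ≃o ↥L₀)) ∧
        ∀ e₁ e₂ : ↥F ≃o ↥F, e₁ = e₂ := by
  have cuts_eq (μ : X → L) : {s : Set X | ∃ p : L, s = {x : X | p ≤ μ x}} = range (cut μ) :=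
    ext fun _ => exists_congr fun _ => eq_comm
  simp only [cuts_eq]
  rw [(cutEquivOrderEmbedding hInt).existsUnique_subtype_congr,
    existsUnique_orderEmbedding_range_iff (fun S : Set L => ⊤ ∈ S ∧ ∀ T ⊆ S, sInf T ∈ S),
    OrderIso.subsingleton_dual_iff, subsingleton_iff]

/-- there is a unique `L`-fuzzy set on `X` whose family of cuts
equals `F` iff `|S(L, F)| = 1` and `|OI(F)| = 1`. -/
theorem unique_fuzzy_set_iff {X L : Type*} [Nonempty X] [CompleteLattice L]
    (F : Set (Set X)) (hXF : Set.univ ∈ F) (hInt : ∀ G ⊆ F, ⋂₀ G ∈ F) :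
    (∃! μ : X → L, {s : Set X | ∃ p : L, s = {x : X | p ≤ μ x}} = F) ↔
      (∃! L₀ : Set L, (⊤ ∈ L₀ ∧ ∀ S ⊆ L₀, sInf S ∈ L₀) ∧
          Nonempty ((↥F)ᵒᵈ ≃o ↥L₀)) ∧
        ∀ e₁ e₂ : ↥F ≃o ↥F, e₁ = e₂ :=
  unique_fuzzy_set_iff_general F hInt
end
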